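/- arXiv:1812.09588 — 2 statements merged into one kernel-verified Lean document; each statement's English description precedes it below -/
import Mathlib

section
/- A direct limit (directed colimit) of locally indicable groups is locally indicable. -/
/-- A group is *indicable* if it admits a surjective homomorphism onto `ℤ`. -/
def Indicable (G : Type*) [Group G] : Prop :=
  ∃ f : G →* Multiplicative ℤ, Function.Surjective f

/-- A group is *locally indicable* if every nontrivial finitely generated subgroup
is indicable. -/
def LocallyIndicable (G : Type*) [Group G] : Prop :=
  ∀ H : Subgroup G, H ≠ ⊥ → H.FG → Indicable H

/-- A direct limit (directed colimit) of locally indicable groups is locally indicable. -/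
theorem directLimit_locallyIndicable {ι : Type*} [Preorder ι] [IsDirected ι (· ≤ ·)]
    (G : ι → Type*) [∀ i, Group (G i)]
    (f : ∀ i j, i ≤ j → G i →* G j)
    (hf : ∀ i j k (hij : i ≤ j) (hjk : j ≤ k) (x : G i),
      f j k hjk (f i j hij x) = f i k (hij.trans hjk) x)
    {L : Type*} [Group L] (g : ∀ i, G i →* L)
    (hg : ∀ i j (hij : i ≤ j) (x : G i), g j (f i j hij x) = g i x)
    (hsurj : ∀ x : L, ∃ i, ∃ y : G i, g i y = x)
    (hker : ∀ i (y : G i), g i y = 1 → ∃ j, ∃ hij : i ≤ j, f i j hij y = 1)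
    (hloc : ∀ i, LocallyIndicable (G i)) :
    LocallyIndicable L := by
  intro H hne hfg
  classical
  obtain ⟨S, hS⟩ := hfg
  have : Nonempty ι := ⟨(hsurj 1).choose⟩
  -- lift the generators
  have hlift : ∀ x : ↥S, ∃ i, ∃ y : G i, g i y = (x : L) := fun x => hsurj x
  choose idx y hy using hlift
  obtain ⟨i₀, hi₀⟩ := Finset.exists_le (Finset.univ.image idx)
  have hle : ∀ x : ↥S, idx x ≤ i₀ := fun x => hi₀ _ (Finset.mem_image_of_mem idx (Finset.mem_univ x))
  set z : ↥S → G i₀ := fun x => f (idx x) i₀ (hle x) (y x) with hzdef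
  have hz : ∀ x, g i₀ (z x) = (x : L) := fun x => by rw [hzdef]; simp only [hg, hy]
  -- the free group on the generators
  set F := FreeGroup ↥S with hF
  set πL : F →* L := FreeGroup.lift (fun x => (x : L)) with hπL
  have hrange : πL.range = H := by
    rw [hπL, FreeGroup.range_lift_eq_closure]
    have : (Set.range fun x : ↥S => (x : L)) = (S : Set L) := by
      ext t; simp
    rw [this, hS]
  set π : ∀ j, i₀ ≤ j → (F →* G j) := fun j h => FreeGroup.lift (fun x => f i₀ j h (z x)) with hπ
  have hπf : ∀ j k (hj : i₀ ≤ j) (hjk : j ≤ k) (a : F),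
      f j k hjk (π j hj a) = π k (hj.trans hjk) a := by
    intro j k hj hjk a
    have : (f j k hjk).comp (π j hj) = π k (hj.trans hjk) := by
      apply FreeGroup.ext_hom
      intro x
      simp [hπ, hf]
    exact DFunLike.congr_fun this a
  have hπg : ∀ j (hj : i₀ ≤ j) (a : F), g j (π j hj a) = πL a := by
    intro j hj a
    have : (g j).comp (π j hj) = πL := by
      apply FreeGroup.ext_hom
      intro x
      simp [hπ, hπL, hg, hz, hy]
    exact DFunLike.congr_fun this a
  -- the evaluation homomorphism into the dual of functions on S
  set ev : F →* Multiplicative ((↥S → ℚ) →ₗ[ℚ] ℚ) :=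
    FreeGroup.lift (fun x => Multiplicative.ofAdd (LinearMap.proj x)) with hev
  -- the subspaces of "relations at stage j"
  set W : ∀ j, i₀ ≤ j → Submodule ℚ (↥S → ℚ) :=
    fun j hj => ⨅ (a : F) (_ : π j hj a = 1), LinearMap.ker (Multiplicative.toAdd (ev a)) with hW
  have hWmem : ∀ j (hj : i₀ ≤ j) (c : ↥S → ℚ),
      c ∈ W j hj ↔ ∀ a : F, π j hj a = 1 → Multiplicative.toAdd (ev a) c = 0 := by
    intro j hj c
    simp [hW, Submodule.mem_iInf, LinearMap.mem_ker]
  have hWanti : ∀ j k (hj : i₀ ≤ j) (hjk : j ≤ k), W k (hj.trans hjk) ≤ W j hj := by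
    intro j k hj hjk c hc
    rw [hWmem] at hc ⊢
    intro a ha
    exact hc a (by rw [← hπf j k hj hjk a, ha, map_one])
  -- minimize the dimension
  set N : Set ℕ := {n | ∃ j hj, n = Module.finrank ℚ (W j hj)} with hN
  have hNne : N.Nonempty := ⟨_, i₀, le_refl i₀, rfl⟩
  obtain ⟨j₀, hj₀, hd⟩ := Nat.sInf_mem hNne
  have hWeq : ∀ k (hk : j₀ ≤ k), W k (hj₀.trans hk) = W j₀ hj₀ := by
    intro k hk
    refine Submodule.eq_of_le_of_finrank_le (hWanti j₀ k hj₀ hk) ?_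
    rw [← hd]
    exact Nat.sInf_le ⟨k, hj₀.trans hk, rfl⟩
  -- the subgroup K of G j₀
  set K : Subgroup (G j₀) := (π j₀ hj₀).range with hK
  have hKfg : K.FG := by
    rw [Subgroup.fg_iff]
    refine ⟨Set.range (fun x => f i₀ j₀ hj₀ (z x)), ?_, Set.finite_range _⟩
    rw [hK, hπ]
    exact FreeGroup.range_lift_eq_closure.symm
  have hKne : K ≠ ⊥ := by
    intro hbot
    apply hne
    rw [← hrange]
    rw [Subgroup.eq_bot_iff_forall]
    rintro x ⟨a, rfl⟩
    rw [← hπg j₀ hj₀ a]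
    have : π j₀ hj₀ a = 1 := by
      have : π j₀ hj₀ a ∈ K := ⟨a, rfl⟩
      rwa [hbot, Subgroup.mem_bot] at this
    rw [this, map_one]
  obtain ⟨χ, hχ⟩ := hloc j₀ K hKne hKfg
  -- the hom into ℚ coming from χ
  set π' : F →* K := (π j₀ hj₀).rangeRestrict with hπ'
  set ρ : F →* Multiplicative ℚ :=
    ((AddMonoidHom.toMultiplicative (Int.castAddHom ℚ)).comp χ).comp π' with hρ
  set c : ↥S → ℚ := fun x => Multiplicative.toAdd (ρ (FreeGroup.of x)) with hc
  -- evaluation of ev at c computes ρ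
  have hevc : ∀ a : F, Multiplicative.toAdd (ev a) c = Multiplicative.toAdd (ρ a) := by
    have key : (AddMonoidHom.toMultiplicative
        ((LinearMap.applyₗ (R := ℚ) c).toAddMonoidHom)).comp ev = ρ := by
      apply FreeGroup.ext_hom
      intro x
      simp only [hev, MonoidHom.comp_apply, FreeGroup.lift_apply_of]
      rw [hc]
      rfl
    intro a
    rw [← key]
    rfl
  -- c lies in W j₀
  have hcW : c ∈ W j₀ hj₀ := by
    rw [hWmem]
    intro a ha
    rw [hevc a]
    have hπ'a : π' a = 1 := by
      apply Subtype.ext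
      rw [hπ', MonoidHom.coe_rangeRestrict]
      simpa using ha
    rw [hρ]
    simp [hπ'a]
  -- key: χ ∘ π' kills the kernel of πL
  have hkey : ∀ a : F, πL a = 1 → χ (π' a) = 1 := by
    intro a ha
    have h1 : g j₀ (π j₀ hj₀ a) = 1 := by rw [hπg j₀ hj₀ a, ha]
    obtain ⟨k, hjk, hk1⟩ := hker j₀ (π j₀ hj₀ a) h1
    have hπk : π k (hj₀.trans hjk) a = 1 := by rw [← hπf j₀ k hj₀ hjk a, hk1]
    have hck : c ∈ W k (hj₀.trans hjk) := by rw [hWeq k hjk]; exact hcW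
    rw [hWmem] at hck
    have h0 : Multiplicative.toAdd (ρ a) = 0 := by rw [← hevc a]; exact hck a hπk
    have h2 : ((Multiplicative.toAdd (χ (π' a)) : ℤ) : ℚ) = 0 := h0
    have h3 : (Multiplicative.toAdd (χ (π' a)) : ℤ) = 0 := by exact_mod_cast h2
    have := congrArg Multiplicative.ofAdd h3
    simpa using this
  -- the projection of F onto H
  have hmemH : ∀ a : F, πL a ∈ H := by
    intro a
    rw [← hrange]
    exact ⟨a, rfl⟩
  set πH : F →* H := πL.codRestrict H hmemH with hπH
  have hπHsurj : Function.Surjective πH := by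
    rintro ⟨x, hx⟩
    rw [← hrange] at hx
    obtain ⟨a, rfl⟩ := hx
    exact ⟨a, rfl⟩
  have hwd : ∀ a b : F, πH a = πH b → χ (π' a) = χ (π' b) := by
    intro a b hab
    have h1 : πL (a * b⁻¹) = 1 := by
      have : πL a = πL b := congrArg Subtype.val hab
      rw [map_mul, this, ← map_mul, mul_inv_cancel, map_one]
    have := hkey _ h1
    simp only [map_mul, map_inv] at this
    exact mul_inv_eq_one.mp this
  -- construct the homomorphism H →* Multiplicative ℤ
  refine ⟨{ toFun := fun h => χ (π' (Function.surjInv hπHsurj h)),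
            map_one' := ?_, map_mul' := ?_ }, ?_⟩
  · have h1 : πH (Function.surjInv hπHsurj 1) = πH 1 := by
      rw [Function.surjInv_eq hπHsurj 1, map_one]
    show χ (π' (Function.surjInv hπHsurj 1)) = 1
    rw [hwd _ _ h1]
    simp
  · intro h₁ h₂
    have h1 : πH (Function.surjInv hπHsurj (h₁ * h₂)) =
        πH (Function.surjInv hπHsurj h₁ * Function.surjInv hπHsurj h₂) := by
      rw [map_mul, Function.surjInv_eq hπHsurj, Function.surjInv_eq hπHsurj,
        Function.surjInv_eq hπHsurj]
    show χ (π' (Function.surjInv hπHsurj (h₁ * h₂))) =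
      χ (π' (Function.surjInv hπHsurj h₁)) * χ (π' (Function.surjInv hπHsurj h₂))
    rw [hwd _ _ h1, map_mul, map_mul]
  · intro m
    obtain ⟨k, hk⟩ := hχ m
    obtain ⟨a, rfl⟩ := (π j₀ hj₀).rangeRestrict_surjective k
    refine ⟨πH a, ?_⟩
    have h1 : πH (Function.surjInv hπHsurj (πH a)) = πH a := Function.surjInv_eq hπHsurj _
    simpa [hwd _ _ h1] using hk
end

section
/- A free product of two locally indicable groups is locally indicable. -/
/-!
Let `H ≤ A ∗ B` be nontrivial and finitely generated. If `H` has nontrivial image under one of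
the projections `A ∗ B → A`, `A ∗ B → B`, that image is a nontrivial finitely generated subgroup
of a locally indicable group, and `H` maps onto it, hence onto `ℤ`. Otherwise `H` lies in the
kernel of `A ∗ B → A × B`, which is free on the commutators `⁅a, b⁆` with `a, b ≠ 1`: rewriting
an element letter by letter puts it in the form `⁅a₁, b₁⁆^{±1} ⋯ ⁅aₙ, bₙ⁆^{±1} * a * b`, and
running this rewriting on a product of commutators recovers the word, which gives injectivity.
By Nielsen–Schreier `H` is then a nontrivial free group, and such a group maps onto `ℤ`.
-/

open Monoid Coprod
open scoped commutatorElement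

section Indicable

variable {G H : Type*} [Group G] [Group H]

theorem Indicable.of_surjective (f : G →* H) (hf : Function.Surjective f) (h : Indicable H) :
    Indicable G :=
  let ⟨g, hg⟩ := h
  ⟨g.comp f, hg.comp hf⟩

theorem IsFreeGroup.indicable [IsFreeGroup G] [Nontrivial G] : Indicable G := by
  obtain ⟨x⟩ : Nonempty (IsFreeGroup.Generators G) := by
    by_contra! h
    exact not_subsingleton G (IsFreeGroup.toFreeGroup G).injective.subsingleton
  refine ⟨IsFreeGroup.lift fun _ => Multiplicative.ofAdd 1,
    fun n => ⟨IsFreeGroup.of x ^ n.toAdd, ?_⟩⟩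
  simp [← ofAdd_zsmul]

theorem Subgroup.FG.map {K : Subgroup G} (hK : K.FG) (f : G →* H) : (K.map f).FG := by
  rw [Subgroup.fg_iff_submonoid_fg] at hK ⊢
  exact hK.map f

theorem LocallyIndicable.indicable_of_map_ne_bot (hH : LocallyIndicable H) (f : G →* H)
    {K : Subgroup G} (hK : K.FG) (hne : K.map f ≠ ⊥) : Indicable K := by
  obtain ⟨g, hg⟩ := hH _ hne (hK.map f)
  exact ⟨g.comp (f.subgroupMap K), hg.comp (f.subgroupMap_surjective K)⟩

theorem indicable_of_le_range {F : Type*} [Group F] [IsFreeGroup F] {f : F →* G}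
    (hf : Function.Injective f) {K : Subgroup G} (hK : K ≤ f.range) (hne : K ≠ ⊥) :
    Indicable K := by
  have e : K.comap f ≃* K := ((K.comap f).equivMapOfInjective f hf).trans
    (MulEquiv.subgroupCongr (Subgroup.map_comap_eq_self hK))
  have : Nontrivial K := (Subgroup.nontrivial_iff_ne_bot K).2 hne
  have : Nontrivial (K.comap f) := e.toEquiv.nontrivial
  exact IsFreeGroup.indicable.of_surjective e.symm.toMonoidHom e.symm.surjective

end Indicable

namespace Monoid.Coprod

variable (A B : Type*) [Group A] [Group B]

abbrev NontrivialPairs : Type _ := {p : A × B // p.1 ≠ 1 ∧ p.2 ≠ 1}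

noncomputable def commutatorHom : FreeGroup (NontrivialPairs A B) →* A ∗ B :=
  FreeGroup.lift fun p => ⁅(inl p.1.1 : A ∗ B), inr p.1.2⁆

variable {A B}

open scoped Classical in
noncomputable def commutatorLetter (a : A) (b : B) : FreeGroup (NontrivialPairs A B) :=
  if h : a ≠ 1 ∧ b ≠ 1 then FreeGroup.of ⟨(a, b), h⟩ else 1

theorem commutatorLetter_one_left (b : B) : commutatorLetter (1 : A) b = 1 := by
  simp [commutatorLetter]

theorem commutatorLetter_one_right (a : A) : commutatorLetter a (1 : B) = 1 := by
  simp [commutatorLetter]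

theorem commutatorHom_commutatorLetter (a : A) (b : B) :
    commutatorHom A B (commutatorLetter a b) = ⁅(inl a : A ∗ B), inr b⁆ := by
  unfold commutatorLetter
  split_ifs with h
  · simp [commutatorHom]
  · obtain rfl | rfl : a = 1 ∨ b = 1 := by tauto
    all_goals simp [commutatorElement_def]

theorem toProd_comp_commutatorHom : toProd.comp (commutatorHom A B) = 1 :=
  FreeGroup.ext_hom _ _ fun p => Prod.ext (by simp [commutatorHom, commutatorElement_def])
    (by simp [commutatorHom, commutatorElement_def])

variable (A B) in
/-- A triple `(u, a, b)` stands for the element `commutatorHom u * inl a * inr b` of `A ∗ B`. -/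
abbrev Triple : Type _ := FreeGroup (NontrivialPairs A B) × A × B

namespace Triple

noncomputable def eval (t : Triple A B) : A ∗ B := commutatorHom A B t.1 * inl t.2.1 * inr t.2.2

theorem toProd_eval (t : Triple A B) : toProd t.eval = (t.2.1, t.2.2) := by
  have h := DFunLike.congr_fun (toProd_comp_commutatorHom (A := A) (B := B)) t.1
  simp only [MonoidHom.comp_apply, MonoidHom.one_apply] at h
  simp [eval, h]

/-- Right multiplication by `x : A`, read off from
`a * b * x = ⁅a, b⁆ * ⁅a * x, b⁆⁻¹ * (a * x) * b` in `A ∗ B`. -/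
noncomputable def mulInl (x : A) (t : Triple A B) : Triple A B :=
  (t.1 * commutatorLetter t.2.1 t.2.2 * (commutatorLetter (t.2.1 * x) t.2.2)⁻¹, t.2.1 * x, t.2.2)

def mulInr (y : B) (t : Triple A B) : Triple A B := (t.1, t.2.1, t.2.2 * y)

theorem eval_mulInl (x : A) (t : Triple A B) :
    (mulInl x t).eval = t.eval * inl x := by
  simp only [eval, mulInl, map_mul, map_inv, commutatorHom_commutatorLetter,
    commutatorElement_def]
  group

theorem eval_mulInr (y : B) (t : Triple A B) :
    (mulInr y t).eval = t.eval * inr y := by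
  simp [eval, mulInr, mul_assoc]

variable (A B) in
/-- `g` acts as right multiplication by `g⁻¹`, so that `act` is a homomorphism. -/
noncomputable def act : A ∗ B →* Function.End (Triple A B) :=
  Coprod.lift
    { toFun := fun x => mulInl x⁻¹
      map_one' := by
        funext t
        show mulInl 1⁻¹ t = t
        simp [mulInl]
      map_mul' := fun x y => by
        funext t
        show mulInl (x * y)⁻¹ t = mulInl x⁻¹ (mulInl y⁻¹ t)
        simp [mulInl, mul_assoc] }
    { toFun := fun y => mulInr y⁻¹
      map_one' := by
        funext t
        show mulInr 1⁻¹ t = t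
        simp [mulInr]
      map_mul' := fun x y => by
        funext t
        show mulInr (x * y)⁻¹ t = mulInr x⁻¹ (mulInr y⁻¹ t)
        simp [mulInr, mul_assoc] }

theorem act_inl (x : A) : act A B (inl x) = mulInl x⁻¹ := rfl

theorem act_inr (y : B) : act A B (inr y) = mulInr y⁻¹ := rfl

theorem act_one_apply (t : Triple A B) : act A B 1 t = t := by
  rw [map_one]
  rfl

theorem act_mul_apply (g h : A ∗ B) (t : Triple A B) :
    act A B (g * h) t = act A B g (act A B h t) := by
  rw [map_mul]
  rfl

theorem act_inv_act (g : A ∗ B) (t : Triple A B) : act A B g⁻¹ (act A B g t) = t := by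
  rw [← act_mul_apply, inv_mul_cancel, act_one_apply]

theorem eval_act (g : A ∗ B) (t : Triple A B) : (act A B g t).eval = t.eval * g⁻¹ := by
  induction g using Coprod.induction_on' generalizing t with
  | one => rw [act_one_apply, inv_one, mul_one]
  | inl_mul x g ih =>
    rw [act_mul_apply, act_inl, eval_mulInl, ih, mul_inv_rev, map_inv, mul_assoc]
  | inr_mul y g ih =>
    rw [act_mul_apply, act_inr, eval_mulInr, ih, mul_inv_rev, map_inv, mul_assoc]

theorem act_commutatorHom (v u : FreeGroup (NontrivialPairs A B)) :
    act A B (commutatorHom A B v) (u, 1, 1) = (u * v⁻¹, 1, 1) := by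
  induction v using FreeGroup.induction_on generalizing u with
  | C1 => rw [map_one, act_one_apply, inv_one, mul_one]
  | of p =>
    obtain ⟨⟨a, b⟩, hab⟩ := p
    have hletter : commutatorLetter a b = FreeGroup.of ⟨(a, b), hab⟩ := dif_pos hab
    simp only [commutatorHom, FreeGroup.lift_apply_of, commutatorElement_def, ← map_inv,
      act_mul_apply, act_inl, act_inr, inv_inv]
    simp [mulInl, mulInr, commutatorLetter_one_left, commutatorLetter_one_right, hletter]
  | inv_of p ih =>
    have h := act_inv_act (commutatorHom A B (.of p)) (u * .of p, 1, 1)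
    rwa [ih, mul_inv_cancel_right, ← map_inv] at h
  | mul v w hv hw =>
    rw [map_mul, act_mul_apply, hw, hv, mul_inv_rev, mul_assoc]

theorem eval_surjective : Function.Surjective (eval : Triple A B → A ∗ B) := fun g =>
  ⟨act A B g⁻¹ (1, 1, 1), by rw [eval_act, inv_inv]; simp [eval]⟩

end Triple

open Triple

theorem commutatorHom_injective : Function.Injective (commutatorHom A B) := by
  refine (injective_iff_map_eq_one _).2 fun v hv => ?_
  have h := act_commutatorHom v 1
  rw [hv, act_one_apply, one_mul] at h
  simpa using congrArg Prod.fst h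

theorem range_commutatorHom : (commutatorHom A B).range = toProd.ker := by
  refine le_antisymm ?_ fun g hg => ?_
  · rintro _ ⟨v, rfl⟩
    exact DFunLike.congr_fun toProd_comp_commutatorHom v
  obtain ⟨t, ht⟩ := eval_surjective g
  have hab : (t.2.1, t.2.2) = 1 := by rw [← toProd_eval, ht]; exact hg
  obtain ⟨ha, hb⟩ := Prod.ext_iff.1 hab
  refine ⟨t.1, ?_⟩
  rw [← ht, eval, ha, hb]
  simp

end Monoid.Coprod

/-- A free product of two locally indicable groups is locally indicable. -/
theorem freeProduct_locallyIndicable {A B : Type*} [Group A] [Group B]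
    (hA : LocallyIndicable A) (hB : LocallyIndicable B) :
    LocallyIndicable (Monoid.Coprod A B) := by
  intro H hne hfg
  obtain hfst | hfst := ne_or_eq (H.map fst) ⊥
  · exact hA.indicable_of_map_ne_bot fst hfg hfst
  obtain hsnd | hsnd := ne_or_eq (H.map snd) ⊥
  · exact hB.indicable_of_map_ne_bot snd hfg hsnd
  have hH : H ≤ (commutatorHom A B).range := by
    rw [range_commutatorHom, ← fst_prod_snd, MonoidHom.ker_prod]
    exact le_inf ((H.map_eq_bot_iff).1 hfst) ((H.map_eq_bot_iff).1 hsnd)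
  exact indicable_of_le_range commutatorHom_injective hH hne
end
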